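/- Let B be an isolating block for the flow φ with entrance set ∂₊B, exit set ∂₋B, and let a_± ⊆ ∂_±B denote the points whose forward (resp. backward) orbit stays in B. Then the flow-induced map h_B: ∂₊B \ a₊ → ∂₋B \ a₋, sending an entrance point to its first exit point, is a homeomorphism. -/

import Mathlib

open MeasureTheory Set

/-- A set is invariant under the flow `φ`. -/
def InvariantSet {M : Type*} (φ : ℝ → M → M) (Z : Set M) : Prop :=
  ∀ t, φ t '' Z ⊆ Z

/-- The time-`t` flow map applied to pairs, used to express local product structures. -/
def flowMap {M : Type*} (φ : ℝ → M → M) : M × ℝ → M := fun p => φ p.2 p.1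

/-- `S` is a local cross section of width `2δ` for the flow `φ`: the flow-induced map
`S × (-δ,δ) → M` is injective with open image (a homeomorphism onto its image). -/
def IsLocalCrossSection {M : Type*} [TopologicalSpace M] (φ : ℝ → M → M)
    (S : Set M) (δ : ℝ) : Prop :=
  Set.InjOn (flowMap φ) (S ×ˢ Set.Ioo (-δ) δ) ∧
  IsOpen (flowMap φ '' (S ×ˢ Set.Ioo (-δ) δ))

/-- An isolating block `B` for the invariant set `Z` with respect to the flow `φ`,
with entrance set `∂₊B = Splus ∩ B` and exit set `∂₋B = Sminus ∩ B`. -/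
structure IsolatingBlock {M : Type*} [TopologicalSpace M] (φ : ℝ → M → M)
    (Z : Set M) where
  B : Set M
  Splus : Set M
  Sminus : Set M
  δ : ℝ
  δ_pos : 0 < δ
  /-- `B` is the closure of an open set. -/
  closure_int : B = closure (interior B)
  secPlus : IsLocalCrossSection φ Splus δ
  secMinus : IsLocalCrossSection φ Sminus δ
  /-- (B1) the entrance and exit sets are closed in `M`. -/
  entrance_closed : IsClosed (Splus ∩ B)
  exit_closed : IsClosed (Sminus ∩ B)
  /-- (B2) near the entrance set, `B` consists of forward flow segments. -/
  B2plus : flowMap φ '' (Splus ×ˢ Set.Ioo (-δ) δ) ∩ B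
      = flowMap φ '' ((Splus ∩ B) ×ˢ Set.Ico 0 δ)
  /-- (B2) near the exit set, `B` consists of backward flow segments. -/
  B2minus : flowMap φ '' (Sminus ×ˢ Set.Ioo (-δ) δ) ∩ B
      = flowMap φ '' ((Sminus ∩ B) ×ˢ Set.Ioc (-δ) 0)
  /-- (B3) other boundary points flow inside the boundary from `∂₊B` to `∂₋B`. -/
  B3 : ∀ x ∈ (frontier B) \ ((Splus ∩ B) ∪ (Sminus ∩ B)), ∃ t₁ < (0:ℝ), ∃ t₂ > (0:ℝ),
      (∀ t ∈ Set.Icc t₁ t₂, φ t x ∈ frontier B) ∧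
      φ t₁ x ∈ Splus ∩ B ∧ φ t₂ x ∈ Sminus ∩ B
  /-- (B4) `Z` is the maximal invariant subset of `B`. -/
  maximal : ∀ S ⊆ B, InvariantSet φ S → S ⊆ Z
  Z_sub : Z ⊆ B
  Z_inv : InvariantSet φ Z

/-- entrance set of an isolating block -/
def IsolatingBlock.entrance {M : Type*} [TopologicalSpace M] {φ : ℝ → M → M}
    {Z : Set M} (bl : IsolatingBlock φ Z) : Set M := bl.Splus ∩ bl.B

/-- exit set of an isolating block -/
def IsolatingBlock.exit {M : Type*} [TopologicalSpace M] {φ : ℝ → M → M}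
    {Z : Set M} (bl : IsolatingBlock φ Z) : Set M := bl.Sminus ∩ bl.B

/-- `ν` is the slice measure induced on the local cross section `S` (of width `2δ`)
by the flow-invariant measure `μ`, characterized by
`μ(A ⋅ (s,t)) = (t - s) ⋅ ν(A)` for measurable `A ⊆ S` and `-δ < s ≤ t < δ`. -/
def IsSliceMeasure {M : Type*} [TopologicalSpace M] [MeasurableSpace M]
    (φ : ℝ → M → M) (μ : Measure M) (S : Set M) (δ : ℝ) (ν : Measure M) : Prop :=
  (∀ A : Set M, A ⊆ S → MeasurableSet A → ∀ s t : ℝ, -δ < s → s ≤ t → t < δ →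
    μ (flowMap φ '' (A ×ˢ Set.Ioo s t)) = ENNReal.ofReal (t - s) * ν A) ∧
  ν Sᶜ = 0

/-- the first exit time from the block `B` -/
noncomputable def exitTime {M : Type*} (φ : ℝ → M → M) (B : Set M) (x : M) : ℝ :=
  sInf {t : ℝ | 0 < t ∧ φ t x ∉ B}

/-!
The exit time is upper semicontinuous because an orbit leaving through the exit section is outside
`B` immediately afterwards, an open condition; it is lower semicontinuous because, on a compact
time interval before the exit time, the orbit avoids the closed exit set, and so do the orbits of
nearby points. The point reached at the exit time lies in `∂₋B`: otherwise (B2) or (B3) would keep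
the orbit in `B` a little longer. For the reversed flow `B` is again an isolating block, with
entrance and exit swapped, and its exit map inverts `h_B`.
-/

open Filter Topology

section ExitTime

variable {M : Type*} {φ : ℝ → M → M} {B : Set M} {x : M} {t : ℝ}

/-- The exit map `h_B`. -/
noncomputable def exitMap (φ : ℝ → M → M) (B : Set M) (x : M) : M := φ (exitTime φ B x) x

theorem exitTime_le (ht : 0 < t) (hout : φ t x ∉ B) : exitTime φ B x ≤ t :=
  csInf_le ⟨0, fun _ hs => hs.1.le⟩ ⟨ht, hout⟩

theorem flow_mem_of_lt_exitTime (ht : 0 < t) (hlt : t < exitTime φ B x) : φ t x ∈ B := by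
  by_contra hout
  exact (exitTime_le ht hout).not_gt hlt

theorem exitTime_eq {τ δ : ℝ} (hτ : 0 ≤ τ) (hδ : 0 < δ) (hin : ∀ t ∈ Ioc 0 τ, φ t x ∈ B)
    (hout : ∀ t ∈ Ioo τ (τ + δ), φ t x ∉ B) : exitTime φ B x = τ := by
  refine csInf_eq_of_forall_ge_of_forall_gt_exists_lt
    ⟨τ + δ / 2, by positivity, hout _ ⟨by linarith, by linarith⟩⟩ ?_ ?_
  · intro s ⟨hs, hsout⟩
    by_contra! hlt
    exact hsout (hin s ⟨hs, hlt.le⟩)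
  · intro w hw
    obtain ⟨s, hτs, hs⟩ := exists_between (lt_min hw (lt_add_of_pos_right τ hδ))
    exact ⟨s, ⟨by linarith, hout s ⟨hτs, hs.trans_le (min_le_right _ _)⟩⟩,
      hs.trans_le (min_le_left _ _)⟩

theorem exitMap_mem_of_isClosed [TopologicalSpace M] (hB : IsClosed B)
    (hc : Continuous fun t => φ t x) (hpos : 0 < exitTime φ B x) : exitMap φ B x ∈ B :=
  hB.mem_of_tendsto ((hc.tendsto _).mono_left nhdsWithin_le_nhds) <| by
    filter_upwards [Ioo_mem_nhdsLT hpos] with t ht using flow_mem_of_lt_exitTime ht.1 ht.2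

theorem frequently_flow_notMem_exitTime (hne : ∃ t > 0, φ t x ∉ B)
    (hin : exitMap φ B x ∈ B) :
    ∃ᶠ s in 𝓝[>] (0 : ℝ), φ (s + exitTime φ B x) x ∉ B := by
  intro hev
  obtain ⟨ε, hε, hsub⟩ := mem_nhdsGT_iff_exists_Ioo_subset.1 hev
  set τ := exitTime φ B x
  suffices τ + ε ≤ τ by linarith [mem_Ioi.1 hε]
  refine le_csInf hne fun b ⟨hb, hbout⟩ => not_lt.1 fun hlt => hbout ?_
  rcases lt_trichotomy b τ with hbτ | rfl | hτb
  · exact flow_mem_of_lt_exitTime hb hbτ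
  · exact hin
  · simpa using hsub ⟨sub_pos.2 hτb, by linarith⟩

end ExitTime

namespace IsolatingBlock

variable {M : Type*} [TopologicalSpace M] {φ : ℝ → M → M} {Z : Set M}
  (bl : IsolatingBlock φ Z) {x : M} {t : ℝ}

theorem isClosed : IsClosed bl.B := bl.closure_int ▸ isClosed_closure

theorem flow_mem_of_mem_entrance (hx : x ∈ bl.entrance) (ht : t ∈ Ico 0 bl.δ) :
    φ t x ∈ bl.B := by
  have h : flowMap φ (x, t) ∈ flowMap φ '' (bl.entrance ×ˢ Ico 0 bl.δ) :=
    ⟨(x, t), ⟨hx, ht⟩, rfl⟩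
  rw [entrance, ← bl.B2plus] at h
  exact h.2

theorem flow_notMem_of_mem_entrance (hx : x ∈ bl.entrance) (ht : t ∈ Ioo (-bl.δ) 0) :
    φ t x ∉ bl.B := by
  intro hB
  have hxt : (x, t) ∈ bl.Splus ×ˢ Ioo (-bl.δ) bl.δ := ⟨hx.1, ht.1, ht.2.trans bl.δ_pos⟩
  have h : flowMap φ (x, t) ∈ flowMap φ '' (bl.Splus ×ˢ Ioo (-bl.δ) bl.δ) ∩ bl.B :=
    ⟨⟨(x, t), hxt, rfl⟩, hB⟩
  rw [bl.B2plus] at h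
  obtain ⟨⟨w, s⟩, ⟨hw, hs⟩, heq⟩ := h
  have hws : (w, s) ∈ bl.Splus ×ˢ Ioo (-bl.δ) bl.δ :=
    ⟨hw.1, by linarith [hs.1, bl.δ_pos], hs.2⟩
  have : s = t := congrArg Prod.snd (bl.secPlus.1 hws hxt heq)
  linarith [hs.1, ht.2]

/-- The set `∂₊B \ a₊`. -/
def leavingEntrance : Set M := {x ∈ bl.entrance | ∃ t > 0, φ t x ∉ bl.B}

theorem delta_le_exitTime (hx : x ∈ bl.leavingEntrance) : bl.δ ≤ exitTime φ bl.B x :=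
  le_csInf hx.2 fun _ ⟨hb, hbout⟩ =>
    not_lt.1 fun hlt => hbout (bl.flow_mem_of_mem_entrance hx.1 ⟨hb.le, hlt⟩)

theorem exitTime_pos (hx : x ∈ bl.leavingEntrance) : 0 < exitTime φ bl.B x :=
  bl.δ_pos.trans_le (bl.delta_le_exitTime hx)

end IsolatingBlock

section Reverse

variable {M : Type*} [TopologicalSpace M] {Z : Set M} (ϕ : Flow ℝ M)

theorem flowMap_reverse : flowMap ϕ.reverse = flowMap ϕ ∘ Prod.map id (Neg.neg : ℝ → ℝ) := rfl

theorem flowMap_reverse_image (S : Set M) (I : Set ℝ) :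
    flowMap ϕ.reverse '' (S ×ˢ I) = flowMap ϕ '' (S ×ˢ (-I)) := by
  rw [flowMap_reverse, image_comp, prodMap_image_prod, image_id, image_neg_eq_neg]

theorem exitMap_reverse_reverse (B : Set M) : exitMap ϕ.reverse.reverse B = exitMap ϕ B := by
  ext x
  simp [exitMap, exitTime]

variable {ϕ}

theorem IsLocalCrossSection.reverse {S : Set M} {δ : ℝ} (h : IsLocalCrossSection ϕ S δ) :
    IsLocalCrossSection ϕ.reverse S δ := by
  have hI : -Ioo (-δ) δ = Ioo (-δ) δ := by rw [neg_Ioo, neg_neg]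
  refine ⟨?_, by rw [flowMap_reverse_image, hI]; exact h.2⟩
  rw [flowMap_reverse]
  refine h.1.comp (Function.injective_id.prodMap neg_injective).injOn fun p hp => ⟨hp.1, ?_⟩
  rw [← hI]
  exact neg_mem_neg.2 hp.2

def IsolatingBlock.reverse (bl : IsolatingBlock ϕ Z) : IsolatingBlock ϕ.reverse Z where
  B := bl.B
  Splus := bl.Sminus
  Sminus := bl.Splus
  δ := bl.δ
  δ_pos := bl.δ_pos
  closure_int := bl.closure_int
  secPlus := bl.secMinus.reverse
  secMinus := bl.secPlus.reverse
  entrance_closed := bl.exit_closed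
  exit_closed := bl.entrance_closed
  B2plus := by
    rw [flowMap_reverse_image, flowMap_reverse_image, neg_Ioo, neg_Ico, neg_neg, neg_zero]
    exact bl.B2minus
  B2minus := by
    rw [flowMap_reverse_image, flowMap_reverse_image, neg_Ioo, neg_Ioc, neg_neg, neg_zero]
    exact bl.B2plus
  B3 x hx := by
    obtain ⟨t₁, ht₁, t₂, ht₂, hseg, hent, hexit⟩ := bl.B3 x ⟨hx.1, fun h => hx.2 h.symm⟩
    refine ⟨-t₂, by linarith, -t₁, by linarith, fun t ht => hseg (-t) ⟨?_, ?_⟩, ?_, ?_⟩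
    · linarith [ht.2]
    · linarith [ht.1]
    · rwa [Flow.reverse_apply, neg_neg]
    · rwa [Flow.reverse_apply, neg_neg]
  maximal S hS hinv := bl.maximal S hS fun t y ⟨w, hw, hy⟩ =>
    hinv (-t) ⟨w, hw, by rwa [Flow.reverse_apply, neg_neg]⟩
  Z_sub := bl.Z_sub
  Z_inv t y hy := bl.Z_inv (-t) hy

theorem IsolatingBlock.flow_notMem_of_mem_exit (bl : IsolatingBlock ϕ Z) {x : M} {t : ℝ}
    (hx : x ∈ bl.exit) (ht : t ∈ Ioo 0 bl.δ) : ϕ t x ∉ bl.B := by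
  have h := bl.reverse.flow_notMem_of_mem_entrance hx (t := -t)
    ⟨neg_lt_neg ht.2, neg_neg_of_pos ht.1⟩
  rwa [Flow.reverse_apply, neg_neg] at h

end Reverse

namespace IsolatingBlock

variable {M : Type*} [TopologicalSpace M] {Z : Set M} {ϕ : Flow ℝ M}
  (bl : IsolatingBlock ϕ Z) {x y : M}

theorem exitMap_mem (hx : x ∈ bl.leavingEntrance) : exitMap ϕ bl.B x ∈ bl.B :=
  exitMap_mem_of_isClosed bl.isClosed (ϕ.continuous continuous_id continuous_const)
    (bl.exitTime_pos hx)

theorem eventually_flow_mem (hy : y ∈ bl.B) (hy' : y ∉ bl.exit) :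
    ∀ᶠ s in 𝓝[>] (0 : ℝ), ϕ s y ∈ bl.B := by
  by_cases hint : y ∈ interior bl.B
  · have hc : Continuous fun s : ℝ => ϕ s y := ϕ.continuous continuous_id continuous_const
    have hnhds := hc.continuousAt.preimage_mem_nhds
      (isOpen_interior.mem_nhds (by rwa [Flow.map_zero_apply]))
    exact nhdsWithin_le_nhds <|
      mem_of_superset hnhds fun _ hs => interior_subset (s := bl.B) hs
  by_cases hent : y ∈ bl.entrance
  · filter_upwards [Ioo_mem_nhdsGT bl.δ_pos] with s hs
    exact bl.flow_mem_of_mem_entrance hent ⟨hs.1.le, hs.2⟩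
  obtain ⟨t₁, ht₁, t₂, ht₂, hseg, -, -⟩ :=
    bl.B3 y ⟨⟨subset_closure hy, hint⟩, fun h => h.elim hent hy'⟩
  filter_upwards [nhdsWithin_le_nhds (Icc_mem_nhds ht₁ ht₂)] with s hs
  exact bl.isClosed.frontier_subset (hseg s hs)

theorem exitMap_mem_exit (hx : x ∈ bl.leavingEntrance) : exitMap ϕ bl.B x ∈ bl.exit := by
  by_contra hnot
  have hfreq := frequently_flow_notMem_exitTime hx.2 (bl.exitMap_mem hx)
  obtain ⟨s, hout, hin⟩ :=
    (hfreq.and_eventually (bl.eventually_flow_mem (bl.exitMap_mem hx) hnot)).exists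
  exact hout (by rwa [Flow.map_add])

theorem flow_notMem_exit_of_lt_exitTime {s : ℝ} (h0 : 0 < s) (hs : s < exitTime ϕ bl.B x) :
    ϕ s x ∉ bl.exit := by
  intro hexit
  obtain ⟨c, hc0, hc⟩ := exists_between (lt_min bl.δ_pos (sub_pos.2 hs))
  refine bl.flow_notMem_of_mem_exit hexit ⟨hc0, hc.trans_le (min_le_left _ _)⟩ ?_
  rw [← Flow.map_add]
  have := min_le_right bl.δ (exitTime ϕ bl.B x - s)
  exact flow_mem_of_lt_exitTime (by linarith) (by linarith)

theorem eventually_exitTime_lt {x₀ : M} {b : ℝ} (hx₀ : x₀ ∈ bl.leavingEntrance)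
    (hb : exitTime ϕ bl.B x₀ < b) : ∀ᶠ x in 𝓝 x₀, exitTime ϕ bl.B x < b := by
  obtain ⟨c, hc0, hc⟩ := exists_between (lt_min bl.δ_pos (sub_pos.2 hb))
  have hout : ϕ (c + exitTime ϕ bl.B x₀) x₀ ∉ bl.B := by
    rw [Flow.map_add]
    exact bl.flow_notMem_of_mem_exit (bl.exitMap_mem_exit hx₀)
      ⟨hc0, hc.trans_le (min_le_left _ _)⟩
  have hopen : IsOpen {x | ϕ (c + exitTime ϕ bl.B x₀) x ∉ bl.B} :=
    bl.isClosed.isOpen_compl.preimage (ϕ.continuous continuous_const continuous_id)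
  filter_upwards [hopen.mem_nhds hout] with x hx
  have := min_le_right bl.δ (b - exitTime ϕ bl.B x₀)
  exact (exitTime_le (by linarith [bl.exitTime_pos hx₀]) hx).trans_lt (by linarith)

theorem eventually_lt_exitTime {x₀ : M} {a : ℝ} (ha : a < exitTime ϕ bl.B x₀) :
    ∀ᶠ x in 𝓝 x₀, x ∈ bl.leavingEntrance → a < exitTime ϕ bl.B x := by
  have hK : ∀ᶠ x in 𝓝 x₀, ∀ s ∈ Icc bl.δ a, ϕ s x ∉ bl.exit := by
    refine isCompact_Icc.eventually_forall_of_forall_eventually fun s hs => ?_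
    have hopen : IsOpen {p : M × ℝ | ϕ p.2 p.1 ∉ bl.exit} :=
      bl.exit_closed.isOpen_compl.preimage (ϕ.continuous continuous_snd continuous_fst)
    exact hopen.mem_nhds
      (bl.flow_notMem_exit_of_lt_exitTime (bl.δ_pos.trans_le hs.1) (hs.2.trans_lt ha))
  filter_upwards [hK] with x hx hxl
  by_contra! hle
  exact hx _ ⟨bl.delta_le_exitTime hxl, hle⟩ (bl.exitMap_mem_exit hxl)

theorem continuousOn_exitTime : ContinuousOn (exitTime ϕ bl.B) bl.leavingEntrance :=
  fun _ hx₀ => tendsto_order.2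
    ⟨fun _ ha => eventually_nhdsWithin_iff.2 (bl.eventually_lt_exitTime ha),
      fun _ hb => eventually_nhdsWithin_of_eventually_nhds
        (bl.eventually_exitTime_lt hx₀ hb)⟩

theorem continuousOn_exitMap : ContinuousOn (exitMap ϕ bl.B) bl.leavingEntrance :=
  ϕ.cont'.comp_continuousOn (bl.continuousOn_exitTime.prodMk continuousOn_id)

theorem mapsTo_exitMap :
    MapsTo (exitMap ϕ bl.B) bl.leavingEntrance bl.reverse.leavingEntrance := by
  intro x hx
  refine ⟨bl.exitMap_mem_exit hx, exitTime ϕ bl.B x + bl.δ / 2,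
    by linarith [bl.exitTime_pos hx, bl.δ_pos], ?_⟩
  rw [Flow.reverse_apply, exitMap, ← Flow.map_add,
    show -(exitTime ϕ bl.B x + bl.δ / 2) + exitTime ϕ bl.B x = -(bl.δ / 2) by ring]
  exact bl.flow_notMem_of_mem_entrance hx.1 ⟨by linarith [bl.δ_pos], by linarith [bl.δ_pos]⟩

theorem exitTime_reverse_exitMap (hx : x ∈ bl.leavingEntrance) :
    exitTime ϕ.reverse bl.B (exitMap ϕ bl.B x) = exitTime ϕ bl.B x := by
  have hτ := bl.exitTime_pos hx
  refine exitTime_eq hτ.le bl.δ_pos (fun t ht => ?_) (fun t ht => ?_) <;>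
    rw [Flow.reverse_apply, exitMap, ← Flow.map_add]
  · rcases ht.2.eq_or_lt with rfl | hlt
    · rw [neg_add_cancel, Flow.map_zero_apply]
      exact hx.1.2
    · exact flow_mem_of_lt_exitTime (by linarith) (by linarith [ht.1])
  · exact bl.flow_notMem_of_mem_entrance hx.1 ⟨by linarith [ht.2], by linarith [ht.1]⟩

theorem exitMap_reverse_exitMap (hx : x ∈ bl.leavingEntrance) :
    exitMap ϕ.reverse bl.B (exitMap ϕ bl.B x) = x := by
  rw [exitMap, bl.exitTime_reverse_exitMap hx, Flow.reverse_apply, exitMap, ← Flow.map_add,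
    neg_add_cancel, Flow.map_zero_apply]

theorem reverse_reverse_leavingEntrance :
    bl.reverse.reverse.leavingEntrance = bl.leavingEntrance := by
  simp [leavingEntrance, entrance, IsolatingBlock.reverse]

theorem mapsTo_exitMap_reverse :
    MapsTo (exitMap ϕ.reverse bl.B) bl.reverse.leavingEntrance bl.leavingEntrance := by
  have h := bl.reverse.mapsTo_exitMap
  rwa [bl.reverse_reverse_leavingEntrance] at h

theorem exitMap_exitMap_reverse (hy : y ∈ bl.reverse.leavingEntrance) :
    exitMap ϕ bl.B (exitMap ϕ.reverse bl.B y) = y := by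
  have h := bl.reverse.exitMap_reverse_exitMap hy
  rwa [exitMap_reverse_reverse] at h

noncomputable def exitHomeomorph : bl.leavingEntrance ≃ₜ bl.reverse.leavingEntrance where
  toFun := bl.mapsTo_exitMap.restrict
  invFun := bl.mapsTo_exitMap_reverse.restrict
  left_inv x := Subtype.ext (bl.exitMap_reverse_exitMap x.2)
  right_inv y := Subtype.ext (bl.exitMap_exitMap_reverse y.2)
  continuous_toFun := bl.continuousOn_exitMap.mapsToRestrict bl.mapsTo_exitMap
  continuous_invFun :=
    bl.reverse.continuousOn_exitMap.mapsToRestrict bl.mapsTo_exitMap_reverse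

theorem entrance_diff_eq_leavingEntrance :
    bl.entrance \ {x ∈ bl.entrance | ∀ t : ℝ, 0 ≤ t → ϕ t x ∈ bl.B} = bl.leavingEntrance := by
  ext x
  refine ⟨fun ⟨hx, hnot⟩ => ⟨hx, ?_⟩,
    fun ⟨hx, t, ht, hout⟩ => ⟨hx, fun h => hout (h.2 t ht.le)⟩⟩
  by_contra! hstay
  refine hnot ⟨hx, fun t ht => ?_⟩
  rcases ht.eq_or_lt with rfl | htpos
  · rw [Flow.map_zero_apply]
    exact hx.2
  · exact hstay t htpos

theorem exit_diff_eq_reverse_leavingEntrance :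
    bl.exit \ {x ∈ bl.exit | ∀ t : ℝ, t ≤ 0 → ϕ t x ∈ bl.B} = bl.reverse.leavingEntrance := by
  rw [← bl.reverse.entrance_diff_eq_leavingEntrance]
  refine congrArg (bl.exit \ ·) (Set.ext fun x => and_congr_right fun _ => ?_)
  exact ⟨fun h t ht => h (-t) (neg_nonpos.2 ht),
    fun h t ht => by
      have hmem := h (-t) (neg_nonneg.2 ht)
      rwa [Flow.reverse_apply, neg_neg] at hmem⟩

end IsolatingBlock

theorem exitMap_homeomorph_general {M : Type*} [TopologicalSpace M]
    (φ : ℝ → M → M)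
    (hcont : Continuous (fun p : ℝ × M => φ p.1 p.2))
    (hid : ∀ x, φ 0 x = x)
    (hgrp : ∀ s t x, φ (s + t) x = φ s (φ t x))
    (Z : Set M) (bl : IsolatingBlock φ Z) :
    ∀ aP aM : Set M,
      aP = {x ∈ bl.entrance | ∀ t : ℝ, 0 ≤ t → φ t x ∈ bl.B} →
      aM = {x ∈ bl.exit | ∀ t : ℝ, t ≤ 0 → φ t x ∈ bl.B} →
      ContinuousOn (exitTime φ bl.B) (bl.entrance \ aP) ∧
      (∀ x ∈ bl.entrance \ aP, φ (exitTime φ bl.B x) x ∈ bl.exit \ aM) ∧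
      ∃ h : (bl.entrance \ aP : Set M) ≃ₜ (bl.exit \ aM : Set M),
        ∀ p : (bl.entrance \ aP : Set M), (h p : M) = φ (exitTime φ bl.B p) p := by
  obtain ⟨ϕ, rfl⟩ : ∃ ϕ : Flow ℝ M, ⇑ϕ = φ := ⟨⟨φ, hcont, hgrp, hid⟩, rfl⟩
  rintro aP aM rfl rfl
  rw [bl.entrance_diff_eq_leavingEntrance, bl.exit_diff_eq_reverse_leavingEntrance]
  exact ⟨bl.continuousOn_exitTime, bl.mapsTo_exitMap, bl.exitHomeomorph, fun _ => rfl⟩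

/-- for an isolating block `B`, the flow-induced first-exit map
`h_B : ∂₊B \ a₊ → ∂₋B \ a₋` is a homeomorphism (with continuous exit time). -/
theorem exitMap_homeomorph {M : Type*} [TopologicalSpace M] [CompactSpace M]
    (φ : ℝ → M → M)
    (hcont : Continuous (fun p : ℝ × M => φ p.1 p.2))
    (hid : ∀ x, φ 0 x = x)
    (hgrp : ∀ s t x, φ (s + t) x = φ s (φ t x))
    (Z : Set M) (bl : IsolatingBlock φ Z) :
    ∀ aP aM : Set M,
      aP = {x ∈ bl.entrance | ∀ t : ℝ, 0 ≤ t → φ t x ∈ bl.B} →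
      aM = {x ∈ bl.exit | ∀ t : ℝ, t ≤ 0 → φ t x ∈ bl.B} →
      ContinuousOn (exitTime φ bl.B) (bl.entrance \ aP) ∧
      (∀ x ∈ bl.entrance \ aP, φ (exitTime φ bl.B x) x ∈ bl.exit \ aM) ∧
      ∃ h : (bl.entrance \ aP : Set M) ≃ₜ (bl.exit \ aM : Set M),
        ∀ p : (bl.entrance \ aP : Set M), (h p : M) = φ (exitTime φ bl.B p) p :=
  exitMap_homeomorph_general φ hcont hid hgrp Z bl
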